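/- arXiv:1405.4897 — 4 statements merged into one kernel-verified Lean document; each statement's English description precedes it below -/
import Mathlib

section
/- Let R = S(q, r) ∩ {θ : n^T θ ≤ c} be nonempty, where S(q, r) is a closed Euclidean ball and n is a unit vector. If q ∉ R (equivalently n^T q > c), then the diameter of R equals 2√(r² − (n^T q − c)²); otherwise the diameter of R equals 2r. -/
/-!
Write `d = ⟪v, q⟫ - c`. If `d > 0`, every point `x` of the cap satisfies `⟪v, x - q⟫ ≤ -d`, so
`‖x - (q - d • v)‖² = ‖x - q‖² + 2d⟪v, x - q⟫ + d² ≤ r² - d²`: the cap lies in the ball of radius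
`√(r² - d²)` about the foot `q - d • v` of the perpendicular, and it contains the two ends
`q - d • v ± √(r² - d²) • u` of a chord of that length in any unit direction `u ⟂ v`, which exists
since the dimension is at least `2`. If `d ≤ 0`, the same chord through `q` is a diameter of the ball.
-/

open Metric Module RealInnerProductSpace

variable {E : Type*} [NormedAddCommGroup E] [InnerProductSpace ℝ E]

theorem exists_norm_eq_one_inner_eq_zero [FiniteDimensional ℝ E] (h : 2 ≤ finrank ℝ E)
    (v : E) : ∃ u : E, ‖u‖ = 1 ∧ ⟪v, u⟫ = 0 := by
  have hspan : finrank ℝ (ℝ ∙ v) ≤ 1 := by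
    simpa using finrank_span_le_card (R := ℝ) ({v} : Set E)
  have hK : (ℝ ∙ v)ᗮ ≠ ⊥ := by
    intro hbot
    have := (ℝ ∙ v).finrank_add_finrank_orthogonal
    rw [hbot, finrank_bot] at this
    omega
  obtain ⟨w, hwK, hw⟩ := (Submodule.ne_bot_iff _).mp hK
  exact ⟨(‖w‖⁻¹ : ℝ) • w, norm_smul_inv_norm hw,
    Submodule.mem_orthogonal_singleton_iff_inner_right.mp ((ℝ ∙ v)ᗮ.smul_mem _ hwK)⟩

theorem two_mul_le_diam_of_add_smul_mem_of_sub_smul_mem {S : Set E}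
    (hS : Bornology.IsBounded S) {p u : E} (hu : ‖u‖ = 1) {s : ℝ} (hs : 0 ≤ s)
    (hadd : p + s • u ∈ S) (hsub : p - s • u ∈ S) : 2 * s ≤ diam S := by
  have hdist : dist (p + s • u) (p - s • u) = 2 * s := by
    rw [dist_eq_norm, add_sub_sub_cancel, ← two_smul ℝ, smul_smul, norm_smul, hu,
      Real.norm_of_nonneg (by positivity), mul_one]
  exact hdist ▸ dist_le_diam_of_mem hS hadd hsub

theorem add_smul_mem_closedBall_of_inner_eq_zero {p q u : E} {r t : ℝ} (hr : 0 ≤ r)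
    (hu : ‖u‖ = 1) (hpu : ⟪p - q, u⟫ = 0) (h : ‖p - q‖ ^ 2 + t ^ 2 ≤ r ^ 2) :
    p + t • u ∈ closedBall q r := by
  rw [mem_closedBall, dist_eq_norm, add_sub_right_comm, ← sq_le_sq₀ (norm_nonneg _) hr,
    norm_add_sq_real, inner_smul_right, hpu, norm_smul, hu, Real.norm_eq_abs, mul_one, sq_abs]
  linarith

theorem closedBall_inter_halfspace_subset_closedBall {q v : E} (hv : ‖v‖ = 1) {r c : ℝ}
    (hc : c ≤ ⟪v, q⟫) :
    closedBall q r ∩ {θ | ⟪v, θ⟫ ≤ c} ⊆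
      closedBall (q - (⟪v, q⟫ - c) • v) √(r ^ 2 - (⟪v, q⟫ - c) ^ 2) := by
  set d := ⟪v, q⟫ - c
  rintro x ⟨hx, hxc⟩
  rw [mem_closedBall, dist_eq_norm] at hx ⊢
  have hxv : ⟪v, x - q⟫ ≤ -d := by
    rw [inner_sub_right]; linarith [show ⟪v, x⟫ ≤ c from hxc]
  have hnorm : ‖x - (q - d • v)‖ ^ 2 = ‖x - q‖ ^ 2 + 2 * d * ⟪v, x - q⟫ + d ^ 2 := by
    rw [sub_sub_eq_add_sub, add_sub_right_comm, norm_add_sq_real, inner_smul_right, norm_smul,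
      hv, real_inner_comm, Real.norm_eq_abs, mul_one, sq_abs]
    ring
  refine Real.le_sqrt_of_sq_le ?_
  nlinarith [pow_le_pow_left₀ (norm_nonneg _) hx 2,
    mul_le_mul_of_nonneg_left hxv (sub_nonneg.mpr hc)]

theorem two_mul_sqrt_le_diam_closedBall_inter_halfspace {q v u : E} (hv : ‖v‖ = 1)
    (hu : ‖u‖ = 1) (hvu : ⟪v, u⟫ = 0) {r c d : ℝ} (hr : 0 ≤ r) (hdr : d ^ 2 ≤ r ^ 2)
    (hdc : ⟪v, q⟫ - d ≤ c) :
    2 * √(r ^ 2 - d ^ 2) ≤ diam (closedBall q r ∩ {θ | ⟪v, θ⟫ ≤ c}) := by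
  set s := √(r ^ 2 - d ^ 2)
  have hmem (t : ℝ) (ht : t ^ 2 = s ^ 2) :
      q - d • v + t • u ∈ closedBall q r ∩ {θ | ⟪v, θ⟫ ≤ c} := by
    refine ⟨add_smul_mem_closedBall_of_inner_eq_zero hr hu ?_ ?_, ?_⟩
    · rw [sub_sub_cancel_left, inner_neg_left, inner_smul_left, hvu, mul_zero, neg_zero]
    · rw [sub_sub_cancel_left, norm_neg, norm_smul, hv, mul_one, Real.norm_eq_abs, sq_abs, ht,
        Real.sq_sqrt (sub_nonneg.mpr hdr)]
      linarith
    · show ⟪v, q - d • v + t • u⟫ ≤ c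
      rw [inner_add_right, inner_sub_right, inner_smul_right, inner_smul_right, hvu,
        real_inner_self_eq_norm_sq, hv]
      linarith
  refine two_mul_le_diam_of_add_smul_mem_of_sub_smul_mem
    (isBounded_closedBall.subset Set.inter_subset_left) hu (Real.sqrt_nonneg _)
    (hmem s rfl) ?_
  rw [sub_eq_add_neg, ← neg_smul]
  exact hmem (-s) (neg_sq s)

theorem inner_sub_le_of_nonempty_closedBall_inter_halfspace {q v : E} (hv : ‖v‖ = 1) {r c : ℝ}
    (hne : (closedBall q r ∩ {θ | ⟪v, θ⟫ ≤ c}).Nonempty) : ⟪v, q⟫ - c ≤ r := by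
  obtain ⟨θ, hθ, hθc⟩ := hne
  have hθq : ⟪v, q - θ⟫ ≤ r := by
    calc ⟪v, q - θ⟫ ≤ ‖v‖ * ‖q - θ‖ := real_inner_le_norm _ _
      _ ≤ r := by rw [hv, one_mul, ← dist_eq_norm, dist_comm]; exact hθ
  rw [inner_sub_right] at hθq
  linarith [show ⟪v, θ⟫ ≤ c from hθc]

theorem stmt7 (n : ℕ) (hn : 2 ≤ n) (q nv : EuclideanSpace ℝ (Fin n)) (r c : ℝ)
    (hr : 0 < r) (hnv : ‖nv‖ = 1)
    (hne : (Metric.closedBall q r ∩ {θ | (inner ℝ nv θ : ℝ) ≤ c}).Nonempty) :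
    (c < (inner ℝ nv q : ℝ) →
      Metric.diam (Metric.closedBall q r ∩ {θ | (inner ℝ nv θ : ℝ) ≤ c}) =
        2 * Real.sqrt (r ^ 2 - ((inner ℝ nv q : ℝ) - c) ^ 2)) ∧
    ((inner ℝ nv q : ℝ) ≤ c →
      Metric.diam (Metric.closedBall q r ∩ {θ | (inner ℝ nv θ : ℝ) ≤ c}) = 2 * r) := by
  obtain ⟨u, hu, hvu⟩ :=
    exists_norm_eq_one_inner_eq_zero (by rwa [finrank_euclideanSpace_fin]) nv
  constructor
  · intro hc
    have hdr : (⟪nv, q⟫ - c) ^ 2 ≤ r ^ 2 := pow_le_pow_left₀ (by linarith)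
      (inner_sub_le_of_nonempty_closedBall_inter_halfspace hnv hne) 2
    refine le_antisymm ?_ (two_mul_sqrt_le_diam_closedBall_inter_halfspace hnv hu hvu hr.le hdr
      (by linarith))
    exact (diam_mono (closedBall_inter_halfspace_subset_closedBall hnv hc.le)
      isBounded_closedBall).trans (diam_closedBall (Real.sqrt_nonneg _))
  · intro hc
    refine le_antisymm ((diam_mono Set.inter_subset_left isBounded_closedBall).trans
      (diam_closedBall hr.le)) ?_
    simpa [Real.sqrt_sq hr.le] using
      two_mul_sqrt_le_diam_closedBall_inter_halfspace (d := 0) hnv hu hvu hr.le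
        (by simpa using sq_nonneg r) (by linarith)
end

section
/- Fix a dome D = S(q, r) ∩ {θ : n^T θ ≤ c} with r > 0, unit normal n, and ψ = (n^T q − c)/r satisfying |ψ| ≤ 1. Then for any b ∈ R^n, max_{θ ∈ D} θ^T b = q^T b + M(n^T b, ‖b‖₂), where M(t₁, t₂) = r t₂ if t₁ < −ψ t₂, and M(t₁, t₂) = −ψ r t₁ + r √(t₂² − t₁²) √(1 − ψ²) if t₁ ≥ −ψ t₂. -/
/-!
Translating by `q`, the dome becomes `{z | ‖z‖ ≤ r ∧ ⟪n, z⟫ ≤ -ψ r}`. If the unconstrained maximizer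
`r b / ‖b‖` of `⟪·, b⟫` on the ball lies in the half-space (the case `⟪n, b⟫ < -ψ ‖b‖`), it is the
answer. Otherwise the maximum is attained on the rim circle `⟪n, z⟫ = -ψ r`, `‖z‖ = r`, at the point
`z₀ = -ψ r n + r √(1 - ψ²) u / ‖u‖`, where `u` is the component of `b` orthogonal to `n`; optimality
of `z₀` follows from writing `√(1 - ψ²) r b` as a nonnegative combination of `z₀` and `n` (Lagrange
multipliers).
-/

open scoped RealInnerProductSpace

lemma sq_sqrt_one_sub_sq {ψ : ℝ} (hψ : |ψ| ≤ 1) : √(1 - ψ ^ 2) ^ 2 = 1 - ψ ^ 2 :=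
  Real.sq_sqrt (sub_nonneg.2 ((sq_le_one_iff_abs_le_one ψ).2 hψ))

/-- The paper's `M(t₁, t₂)`, with `t₁ = ⟪n, b⟫` and `t₂ = ‖b‖`. -/
noncomputable def domeSupport (r ψ t₁ t₂ : ℝ) : ℝ :=
  if t₁ < -ψ * t₂ then r * t₂
  else -ψ * r * t₁ + r * √(t₂ ^ 2 - t₁ ^ 2) * √(1 - ψ ^ 2)

/- `(t₁, A)` and `(-ψ, κ)` are points of the closed upper half-plane, the first (scaled by `t₂`) at
the smaller angle, so their cross product `κ t₁ + ψ A` is nonnegative. -/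
lemma cross_nonneg_of_neg_mul_le {t₁ t₂ A ψ κ : ℝ} (ht₂ : 0 ≤ t₂) (hA : 0 ≤ A)
    (hA2 : A ^ 2 = t₂ ^ 2 - t₁ ^ 2) (hκ : 0 ≤ κ) (hκ2 : κ ^ 2 = 1 - ψ ^ 2) (h : -ψ * t₂ ≤ t₁) :
    0 ≤ κ * t₁ + ψ * A := by
  rcases le_or_gt 0 t₁ with h1 | h1
  · rcases le_or_gt 0 ψ with h2 | h2
    · positivity
    · have hψt : (ψ * t₂) ^ 2 ≤ t₁ ^ 2 := by nlinarith [mul_nonneg (neg_nonneg.2 h2.le) ht₂]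
      have : -ψ * A ≤ κ * t₁ :=
        (pow_le_pow_iff_left₀ (by nlinarith) (by positivity) two_ne_zero).1 (by nlinarith)
      linarith
  · have hψt : t₁ ^ 2 ≤ (ψ * t₂) ^ 2 := by nlinarith
    have hψ : 0 < ψ := by nlinarith
    have : κ * -t₁ ≤ ψ * A :=
      (pow_le_pow_iff_left₀ (by nlinarith) (by positivity) two_ne_zero).1 (by nlinarith)
    linarith

section Dome

variable {E : Type*} [NormedAddCommGroup E] [InnerProductSpace ℝ E]

lemma norm_inv_norm_smul_le_one (x : E) : ‖‖x‖⁻¹ • x‖ ≤ 1 := by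
  rcases eq_or_ne x 0 with rfl | hx
  · simp
  · exact (norm_smul_inv_norm hx).le

/- Weak duality for maximizing `⟪·, b⟫` over a ball cut by a half-space: the multipliers are
`a` for the ball and `m` for the half-space. -/
lemma inner_le_of_eq_smul_add_smul {n w b z : E} {a m ρ h : ℝ} (hb : b = a • w + m • n)
    (ha : 0 ≤ a) (hm : 0 ≤ m) (hw : ‖w‖ ≤ ρ) (hz : ‖z‖ ≤ ρ) (hnz : ⟪n, z⟫ ≤ h) :
    ⟪z, b⟫ ≤ a * ρ ^ 2 + m * h := by
  have hzw : ⟪z, w⟫ ≤ ρ ^ 2 :=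
    (real_inner_le_norm z w).trans (by nlinarith [norm_nonneg z, norm_nonneg w])
  rw [hb, inner_add_right, real_inner_smul_right, real_inner_smul_right]
  rw [real_inner_comm] at hnz
  gcongr

lemma norm_smul_inv_norm_smul (x : E) : ‖x‖ • ‖x‖⁻¹ • x = x := by
  rcases eq_or_ne x 0 with rfl | hx
  · simp
  · exact smul_inv_smul₀ (norm_ne_zero_iff.2 hx) x

def orthComponent (n b : E) : E := b - ⟪n, b⟫ • n

noncomputable def rimPoint (n b : E) (r ψ : ℝ) : E :=
  -(ψ * r) • n + (r * √(1 - ψ ^ 2)) • ‖orthComponent n b‖⁻¹ • orthComponent n b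

/- The multiplier rule at `rimPoint`: the direction `b` is a nonnegative combination of the outer
normals of the ball and of the half-space there. -/
lemma smul_eq_smul_rimPoint_add_smul (n b : E) (r ψ : ℝ) :
    (√(1 - ψ ^ 2) * r) • b = ‖orthComponent n b‖ • rimPoint n b r ψ
      + (r * (√(1 - ψ ^ 2) * ⟪n, b⟫ + ψ * ‖orthComponent n b‖)) • n := by
  have hb : b = orthComponent n b + ⟪n, b⟫ • n := by rw [orthComponent, sub_add_cancel]
  rw [rimPoint, smul_add, smul_comm _ (r * _), norm_smul_inv_norm_smul]
  conv_lhs => rw [hb]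
  module

variable {n : E} (hn : ‖n‖ = 1) (b : E)
include hn

lemma inner_orthComponent_right : ⟪n, orthComponent n b⟫ = 0 := by
  rw [orthComponent, inner_sub_right, real_inner_smul_right, real_inner_self_eq_norm_sq, hn]
  ring

lemma norm_orthComponent_sq : ‖orthComponent n b‖ ^ 2 = ‖b‖ ^ 2 - ⟪n, b⟫ ^ 2 := by
  rw [orthComponent, norm_sub_sq_real, real_inner_smul_right, real_inner_comm, norm_smul, hn,
    Real.norm_eq_abs, mul_one, sq_abs]
  ring

lemma sqrt_norm_sq_sub_inner_sq : √(‖b‖ ^ 2 - ⟪n, b⟫ ^ 2) = ‖orthComponent n b‖ := by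
  rw [← norm_orthComponent_sq hn, Real.sqrt_sq (norm_nonneg _)]

lemma inner_orthComponent_left : ⟪orthComponent n b, b⟫ = ‖orthComponent n b‖ ^ 2 := by
  rw [norm_orthComponent_sq hn, orthComponent, inner_sub_left, real_inner_smul_left,
    real_inner_self_eq_norm_sq, real_inner_comm]
  ring

lemma inner_rimPoint (r ψ : ℝ) : ⟪n, rimPoint n b r ψ⟫ = -(ψ * r) := by
  rw [rimPoint, inner_add_right, real_inner_smul_right, real_inner_smul_right,
    real_inner_smul_right, inner_orthComponent_right hn, real_inner_self_eq_norm_sq, hn]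
  ring

lemma inner_rimPoint_left (r ψ : ℝ) :
    ⟪rimPoint n b r ψ, b⟫ = -ψ * r * ⟪n, b⟫ + r * ‖orthComponent n b‖ * √(1 - ψ ^ 2) := by
  rw [rimPoint, inner_add_left, real_inner_smul_left, real_inner_smul_left, real_inner_smul_left,
    inner_orthComponent_left hn]
  have : ‖orthComponent n b‖⁻¹ * ‖orthComponent n b‖ ^ 2 = ‖orthComponent n b‖ := by
    rw [sq, ← mul_assoc, inv_mul_mul_self]
  linear_combination r * √(1 - ψ ^ 2) * this

lemma norm_rimPoint_le {r ψ : ℝ} (hr : 0 ≤ r) (hψ : |ψ| ≤ 1) : ‖rimPoint n b r ψ‖ ≤ r := by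
  have hκ := sq_sqrt_one_sub_sq hψ
  have horth :
      ⟪-(ψ * r) • n, (r * √(1 - ψ ^ 2)) • ‖orthComponent n b‖⁻¹ • orthComponent n b⟫ = 0 := by
    rw [real_inner_smul_left, real_inner_smul_right, real_inner_smul_right,
      inner_orthComponent_right hn]
    ring
  have hx : ‖-(ψ * r) • n‖ = |ψ| * r := by
    rw [norm_smul, hn, Real.norm_eq_abs, abs_neg, abs_mul, abs_of_nonneg hr, mul_one]
  have hy : ‖(r * √(1 - ψ ^ 2)) • ‖orthComponent n b‖⁻¹ • orthComponent n b‖ ≤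
      r * √(1 - ψ ^ 2) := by
    rw [norm_smul, Real.norm_of_nonneg (by positivity)]
    exact mul_le_of_le_one_right (by positivity) (norm_inv_norm_smul_le_one _)
  have hsq : ‖rimPoint n b r ψ‖ ^ 2 ≤ r ^ 2 := by
    rw [rimPoint, sq, norm_add_sq_eq_norm_sq_add_norm_sq_real horth, hx]
    nlinarith [sq_abs ψ,
      norm_nonneg ((r * √(1 - ψ ^ 2)) • ‖orthComponent n b‖⁻¹ • orthComponent n b)]
  exact (pow_le_pow_iff_left₀ (norm_nonneg _) hr two_ne_zero).1 hsq

lemma eq_neg_smul_of_norm_le_of_inner_le {z : E} {r : ℝ} (hz : ‖z‖ ≤ r) (hnz : ⟪n, z⟫ ≤ -r) :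
    z = -r • n := by
  have hsq : ‖z + r • n‖ ^ 2 ≤ 0 := by
    rw [norm_add_sq_real, real_inner_smul_right, norm_smul, hn, real_inner_comm, Real.norm_eq_abs,
      mul_one, sq_abs]
    nlinarith [norm_nonneg z]
  rw [neg_smul, ← add_eq_zero_iff_eq_neg, ← norm_eq_zero]
  exact pow_eq_zero_iff two_ne_zero |>.1 (le_antisymm hsq (sq_nonneg _))

lemma inner_le_inner_rimPoint {z : E} {r ψ : ℝ} (hr : 0 < r) (hψ : |ψ| ≤ 1)
    (hb : -ψ * ‖b‖ ≤ ⟪n, b⟫) (hz : ‖z‖ ≤ r) (hnz : ⟪n, z⟫ ≤ -ψ * r) :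
    ⟪z, b⟫ ≤ ⟪rimPoint n b r ψ, b⟫ := by
  have hκ2 := sq_sqrt_one_sub_sq hψ
  rw [inner_rimPoint_left hn]
  rcases (Real.sqrt_nonneg (1 - ψ ^ 2)).eq_or_lt with hκ | hκ
  -- `ψ = 1`: the dome is the single point `-r n`; `ψ = -1`: the dome is the whole ball.
  · rw [← hκ, mul_zero, add_zero]
    have hψ2 : ψ * ψ = 1 := by rw [← hκ] at hκ2; linarith
    rcases mul_self_eq_one_iff.1 hψ2 with rfl | rfl
    · rw [eq_neg_smul_of_norm_le_of_inner_le hn hz (by linarith), real_inner_smul_left]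
      linarith
    · calc ⟪z, b⟫ ≤ ‖z‖ * ‖b‖ := real_inner_le_norm z b
        _ ≤ r * ⟪n, b⟫ := by nlinarith [norm_nonneg z, norm_nonneg b]
        _ = _ := by ring
  · have hcert := inner_le_of_eq_smul_add_smul (smul_eq_smul_rimPoint_add_smul n b r ψ)
      (norm_nonneg _) (mul_nonneg hr.le (cross_nonneg_of_neg_mul_le (norm_nonneg b) (norm_nonneg _)
        (by rw [norm_orthComponent_sq hn]) (Real.sqrt_nonneg _) hκ2 hb))
      (norm_rimPoint_le hn b hr.le hψ) hz hnz
    rw [real_inner_smul_right] at hcert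
    refine le_of_mul_le_mul_left (hcert.trans_eq ?_) (mul_pos hκ hr)
    linear_combination -r ^ 2 * ‖orthComponent n b‖ * hκ2

lemma inner_le_domeSupport {z : E} {r ψ : ℝ} (hr : 0 < r) (hψ : |ψ| ≤ 1) (hz : ‖z‖ ≤ r)
    (hnz : ⟪n, z⟫ ≤ -ψ * r) : ⟪z, b⟫ ≤ domeSupport r ψ ⟪n, b⟫ ‖b‖ := by
  rw [domeSupport]
  split_ifs with h
  · calc ⟪z, b⟫ ≤ ‖z‖ * ‖b‖ := real_inner_le_norm z b
      _ ≤ r * ‖b‖ := by gcongr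
  · rw [sqrt_norm_sq_sub_inner_sq hn, ← inner_rimPoint_left hn]
    exact inner_le_inner_rimPoint hn b hr hψ (not_lt.1 h) hz hnz

lemma exists_inner_eq_domeSupport {r ψ : ℝ} (hr : 0 < r) (hψ : |ψ| ≤ 1) :
    ∃ z : E, ‖z‖ ≤ r ∧ ⟪n, z⟫ ≤ -ψ * r ∧ ⟪z, b⟫ = domeSupport r ψ ⟪n, b⟫ ‖b‖ := by
  rw [domeSupport]
  split_ifs with h
  · have hb : 0 < ‖b‖ := norm_pos_iff.2 (by rintro rfl; simp at h)
    refine ⟨(r / ‖b‖) • b, ?_, ?_, ?_⟩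
    · rw [norm_smul, Real.norm_of_nonneg (by positivity), div_mul_cancel₀ _ hb.ne']
    · rw [real_inner_smul_right]
      calc r / ‖b‖ * ⟪n, b⟫ ≤ r / ‖b‖ * (-ψ * ‖b‖) := by gcongr
        _ = -ψ * r := by field_simp
    · rw [real_inner_smul_left, real_inner_self_eq_norm_sq]
      field_simp
  · refine ⟨rimPoint n b r ψ, norm_rimPoint_le hn b hr.le hψ, ?_, ?_⟩
    · rw [inner_rimPoint hn, neg_mul]
    · rw [inner_rimPoint_left hn, sqrt_norm_sq_sub_inner_sq hn]

end Dome

theorem stmt8 (n : ℕ) (q nv b : EuclideanSpace ℝ (Fin n)) (r c : ℝ)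
    (hr : 0 < r) (hnv : ‖nv‖ = 1)
    (ψ : ℝ) (hψ : ψ = ((inner ℝ nv q : ℝ) - c) / r) (hψ1 : |ψ| ≤ 1) :
    IsGreatest
      ((fun θ => (inner ℝ θ b : ℝ)) '' (Metric.closedBall q r ∩ {θ | (inner ℝ nv θ : ℝ) ≤ c}))
      ((inner ℝ q b : ℝ) +
        (if (inner ℝ nv b : ℝ) < -ψ * ‖b‖ then r * ‖b‖
         else -ψ * r * (inner ℝ nv b : ℝ) +
           r * Real.sqrt (‖b‖ ^ 2 - (inner ℝ nv b : ℝ) ^ 2) * Real.sqrt (1 - ψ ^ 2))) := by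
  have hc : -ψ * r = c - ⟪nv, q⟫ := by
    rw [hψ]
    field_simp
    ring
  change IsGreatest _ (⟪q, b⟫ + domeSupport r ψ ⟪nv, b⟫ ‖b‖)
  refine ⟨?_, ?_⟩
  · obtain ⟨z, hz, hnz, hzb⟩ := exists_inner_eq_domeSupport hnv b hr hψ1
    refine ⟨q + z, ⟨?_, ?_⟩, ?_⟩
    · rwa [Metric.mem_closedBall, dist_eq_norm, add_sub_cancel_left]
    · show ⟪nv, q + z⟫ ≤ c
      rw [inner_add_right]
      linarith
    · show ⟪q + z, b⟫ = _
      rw [inner_add_left, hzb]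
  · rintro _ ⟨θ, ⟨hθ, hnθ⟩, rfl⟩
    change ⟪nv, θ⟫ ≤ c at hnθ
    have h := inner_le_domeSupport hnv b hr hψ1 (z := θ - q) (by rwa [← dist_eq_norm])
      (by rw [inner_sub_right]; linarith)
    rw [inner_sub_left] at h
    linarith
end

section
/- Let θ̂ solve the dual lasso problem of maximizing (1/2)‖y‖₂² − (λ²/2)‖θ − y/λ‖₂² subject to |θ^T b_i| ≤ 1 for all i, and let A = {i : |θ̂^T b_i| = 1} be the active set. Let S be any index set with A ⊆ S ⊆ {1,…,p}. If ŵ is any solution of the full lasso problem min_w (1/2)‖y − Bw‖₂² + λ‖w‖₁, then ŵ_i = 0 for all i ∉ S, and the restriction of ŵ to S solves the reduced lasso problem min_z (1/2)‖y − B_S z‖₂² + λ‖z‖₁, where B_S is the submatrix of columns indexed by S. Conversely, if z* solves the reduced problem, then the zero-padded extension of z* to {1,…,p} solves the full lasso problem. -/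
/-!
For every `w` and every dual-feasible `θ` the duality gap equals
`½‖y - Bw - λθ‖² + λ ∑ᵢ (|wᵢ| - wᵢ ⟪θ, bᵢ⟫)`, a sum of nonnegative terms. At a minimizer `ŵ` the
coordinatewise optimality conditions make `(y - Bŵ)/λ` feasible with zero gap, so `ŵ` also has
zero gap against the dual optimum `θ̂`. Hence `|ŵᵢ| = ŵᵢ ⟪θ̂, bᵢ⟫`, which forces `ŵᵢ = 0` whenever
`|⟪θ̂, bᵢ⟫| < 1`. As the objective is continuous and coercive it has a global minimizer, which is
supported on `S`; so minimizing over vectors supported on `S` loses nothing.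
-/

open Finset Filter Topology
open scoped RealInnerProductSpace

theorem nonpos_of_forall_mul_le_sq_mul {x M : ℝ}
    (h : ∀ s : ℝ, 0 < s → s ≤ 1 → s * x ≤ s ^ 2 * M) : x ≤ 0 := by
  have hlim : Tendsto (fun s : ℝ => s * M) (𝓝[>] 0) (𝓝 0) := by
    simpa using ((continuous_mul_const M).tendsto 0).mono_left nhdsWithin_le_nhds
  refine ge_of_tendsto hlim ?_
  filter_upwards [Ioo_mem_nhdsGT one_pos] with s hs
  exact le_of_mul_le_mul_left (by linarith [h s hs.1 hs.2.le]) hs.1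

theorem abs_le_and_mul_eq_of_forall_le {a c K lam : ℝ} (hlam : 0 ≤ lam)
    (h : ∀ t : ℝ, lam * |a| + t * c ≤ t ^ 2 / 2 * K + lam * |a + t|) :
    |c| ≤ lam ∧ a * c = lam * |a| := by
  have hc : ∀ ε : ℝ, |ε| = 1 → ε * c ≤ lam := by
    intro ε hε
    refine sub_nonpos.1 (nonpos_of_forall_mul_le_sq_mul (M := K / 2) fun s hs _ => ?_)
    have hs' := h (s * ε)
    have htri : |a + s * ε| ≤ |a| + s := by
      simpa [abs_mul, hε, abs_of_pos hs] using abs_add_le a (s * ε)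
    rw [mul_pow, ← sq_abs ε, hε] at hs'
    nlinarith [mul_le_mul_of_nonneg_left htri hlam]
  have habs : |c| ≤ lam :=
    abs_le.2 ⟨by linarith [hc (-1) (by simp)], by linarith [hc 1 (by simp)]⟩
  -- moving `a` towards `0` by the fraction `s` lowers `|a|` by exactly `s * |a|`
  have hshrink : lam * |a| - a * c ≤ 0 := by
    refine nonpos_of_forall_mul_le_sq_mul (M := a ^ 2 * K / 2) fun s hs hs1 => ?_
    have hs' := h (-(s * a))
    rw [show a + -(s * a) = (1 - s) * a by ring, abs_mul,
      abs_of_nonneg (a := 1 - s) (by linarith)] at hs'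
    nlinarith
  refine ⟨habs, le_antisymm ?_ (by linarith)⟩
  calc a * c ≤ |a| * |c| := by rw [← abs_mul]; exact le_abs_self _
    _ ≤ |a| * lam := mul_le_mul_of_nonneg_left habs (abs_nonneg a)
    _ = lam * |a| := mul_comm _ _

theorem Fintype.sum_apply_update {ι M : Type*} [Fintype ι] [DecidableEq ι] [AddCommGroup M]
    (F : ι → ℝ → M) (w : ι → ℝ) (i : ι) (v : ℝ) :
    ∑ j, F j (Function.update w i v j) = ∑ j, F j (w j) + (F i v - F i (w i)) := by
  rw [Fintype.sum_eq_add_sum_compl i, Fintype.sum_eq_add_sum_compl i (fun j => F j (w j)),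
    Function.update_self]
  have hcompl : ∑ j ∈ {i}ᶜ, F j (Function.update w i v j) = ∑ j ∈ {i}ᶜ, F j (w j) :=
    Finset.sum_congr rfl fun j hj => by rw [Function.update_of_ne (by simpa using hj)]
  rw [hcompl]
  abel

theorem mul_le_abs_of_abs_le_one {a c : ℝ} (hc : |c| ≤ 1) : a * c ≤ |a| :=
  calc a * c ≤ |a| * |c| := abs_mul a c ▸ le_abs_self _
    _ ≤ |a| := mul_le_of_le_one_right (abs_nonneg a) hc

section Lasso

variable {ι E : Type*} [Fintype ι] [NormedAddCommGroup E] [InnerProductSpace ℝ E]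

noncomputable def lassoObjective (b : ι → E) (y : E) (lam : ℝ) (w : ι → ℝ) : ℝ :=
  (1/2) * ‖y - ∑ i, w i • b i‖ ^ 2 + lam * ∑ i, |w i|

noncomputable def lassoDual (y : E) (lam : ℝ) (θ : E) : ℝ :=
  (1/2) * ‖y‖ ^ 2 - (lam ^ 2 / 2) * ‖θ - lam⁻¹ • y‖ ^ 2

variable (b : ι → E) (y : E) {lam : ℝ}

theorem lassoObjective_sub_lassoDual (hlam : lam ≠ 0) (w : ι → ℝ) (θ : E) :
    lassoObjective b y lam w - lassoDual y lam θ
      = (1/2) * ‖y - ∑ i, w i • b i - lam • θ‖ ^ 2 + lam * ∑ i, (|w i| - w i * ⟪θ, b i⟫) := by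
  have hdual : lam ^ 2 * ‖θ - lam⁻¹ • y‖ ^ 2 = ‖lam • θ - y‖ ^ 2 := by
    rw [← sq_abs lam, ← mul_pow, ← Real.norm_eq_abs, ← norm_smul, smul_sub, smul_smul,
      mul_inv_cancel₀ hlam, one_smul]
  have hpair : lam * ∑ i, w i * ⟪θ, b i⟫ = ⟪lam • θ, ∑ i, w i • b i⟫ := by
    rw [real_inner_smul_left, inner_sum]
    simp only [real_inner_smul_right]
  simp only [lassoObjective, lassoDual, sum_sub_distrib, mul_sub, hpair]
  set s := ∑ i, w i • b i
  rw [show lam ^ 2 / 2 * ‖θ - lam⁻¹ • y‖ ^ 2 = 1 / 2 * ‖lam • θ - y‖ ^ 2 by rw [← hdual]; ring,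
    norm_sub_sq_real (y - s), norm_sub_sq_real (lam • θ), inner_sub_left, real_inner_comm y,
    real_inner_comm s]
  ring

theorem exists_forall_lassoObjective_le (hlam : 0 < lam) :
    ∃ w : ι → ℝ, ∀ v, lassoObjective b y lam w ≤ lassoObjective b y lam v := by
  have hcont : Continuous (lassoObjective b y lam) := by
    unfold lassoObjective
    fun_prop
  have hcoercive : ∀ w : ι → ℝ, lam * ‖w‖ ≤ lassoObjective b y lam w := by
    intro w
    have hl1 : ‖w‖ ≤ ∑ i, |w i| :=
      (pi_norm_le_iff_of_nonneg (sum_nonneg fun i _ => abs_nonneg (w i))).2 fun i =>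
        single_le_sum (f := fun j => |w j|) (fun j _ => abs_nonneg (w j)) (mem_univ i)
    unfold lassoObjective
    nlinarith [sq_nonneg ‖y - ∑ i, w i • b i‖]
  refine hcont.exists_forall_le (tendsto_atTop_mono hcoercive ?_)
  exact tendsto_norm_cocompact_atTop.const_mul_atTop hlam

variable {b y}

theorem lassoDual_le_lassoObjective (hlam : 0 < lam) {θ : E} (hθ : ∀ i, |⟪θ, b i⟫| ≤ 1)
    (w : ι → ℝ) : lassoDual y lam θ ≤ lassoObjective b y lam w := by
  have hgap := lassoObjective_sub_lassoDual b y hlam.ne' w θ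
  have hsum : 0 ≤ ∑ i, (|w i| - w i * ⟪θ, b i⟫) :=
    sum_nonneg fun i _ => sub_nonneg.2 (mul_le_abs_of_abs_le_one (hθ i))
  nlinarith [sq_nonneg ‖y - ∑ i, w i • b i - lam • θ‖]

theorem eq_zero_of_lassoDual_eq_lassoObjective (hlam : 0 < lam) {θ : E}
    (hθ : ∀ i, |⟪θ, b i⟫| ≤ 1) {w : ι → ℝ} (hgap : lassoDual y lam θ = lassoObjective b y lam w)
    {i : ι} (hi : |⟪θ, b i⟫| < 1) : w i = 0 := by
  have hterm : ∀ j, 0 ≤ |w j| - w j * ⟪θ, b j⟫ :=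
    fun j => sub_nonneg.2 (mul_le_abs_of_abs_le_one (hθ j))
  have hsum : ∑ j, (|w j| - w j * ⟪θ, b j⟫) = 0 := by
    have := lassoObjective_sub_lassoDual b y hlam.ne' w θ
    nlinarith [sq_nonneg ‖y - ∑ i, w i • b i - lam • θ‖,
      sum_nonneg fun j (_ : j ∈ univ) => hterm j]
  have hwi : |w i| = w i * ⟪θ, b i⟫ :=
    sub_eq_zero.1 ((sum_eq_zero_iff_of_nonneg fun j _ => hterm j).1 hsum i (mem_univ i))
  by_contra hne
  refine lt_irrefl |w i| ?_
  calc |w i| = w i * ⟪θ, b i⟫ := hwi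
    _ ≤ |w i| * |⟪θ, b i⟫| := abs_mul (w i) _ ▸ le_abs_self _
    _ < |w i| := mul_lt_of_lt_one_right (abs_pos.2 hne) hi

theorem lassoObjective_update [DecidableEq ι] (w : ι → ℝ) (i : ι) (t : ℝ) :
    lassoObjective b y lam (Function.update w i (w i + t))
      = lassoObjective b y lam w - t * ⟪y - ∑ j, w j • b j, b i⟫ + t ^ 2 / 2 * ‖b i‖ ^ 2
        + lam * (|w i + t| - |w i|) := by
  simp only [lassoObjective, Fintype.sum_apply_update (fun j x => x • b j),
    Fintype.sum_apply_update (fun _ x => |x|)]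
  rw [← sub_smul, add_sub_cancel_left, ← sub_sub, norm_sub_sq_real, real_inner_smul_right,
    norm_smul, Real.norm_eq_abs, mul_pow, sq_abs]
  ring

theorem exists_lassoDual_eq_lassoObjective (hlam : 0 < lam) {w : ι → ℝ}
    (hw : ∀ v, lassoObjective b y lam w ≤ lassoObjective b y lam v) :
    ∃ θ : E, (∀ i, |⟪θ, b i⟫| ≤ 1) ∧ lassoDual y lam θ = lassoObjective b y lam w := by
  classical
  set r := y - ∑ j, w j • b j
  have hopt : ∀ i, |⟪r, b i⟫| ≤ lam ∧ w i * ⟪r, b i⟫ = lam * |w i| := fun i =>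
    abs_le_and_mul_eq_of_forall_le (K := ‖b i‖ ^ 2) hlam.le fun t => by
      linarith [hw (Function.update w i (w i + t)),
        lassoObjective_update (b := b) (y := y) (lam := lam) w i t]
  have hinner : ∀ i, ⟪lam⁻¹ • r, b i⟫ = lam⁻¹ * ⟪r, b i⟫ := fun i => real_inner_smul_left _ _ _
  refine ⟨lam⁻¹ • r, fun i => ?_, ?_⟩
  · rw [hinner, abs_mul, abs_inv, abs_of_pos hlam, inv_mul_le_one₀ hlam]
    exact (hopt i).1
  · have hgap := lassoObjective_sub_lassoDual b y hlam.ne' w (lam⁻¹ • r)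
    have hres : y - ∑ j, w j • b j - lam • lam⁻¹ • r = 0 := by
      rw [smul_inv_smul₀ hlam.ne']
      exact sub_self r
    have hcompl : ∀ i, |w i| - w i * ⟪lam⁻¹ • r, b i⟫ = 0 := fun i => by
      rw [hinner, mul_left_comm, (hopt i).2, inv_mul_cancel_left₀ hlam.ne', sub_self]
    simp only [hres, hcompl, norm_zero, sum_const_zero] at hgap
    linarith

theorem lassoMinimizer_apply_eq_zero_of_abs_inner_lt_one (hlam : 0 < lam) {θh : E}
    (hθh : ∀ i, |⟪θh, b i⟫| ≤ 1)
    (hθh_max : ∀ θ, (∀ i, |⟪θ, b i⟫| ≤ 1) → lassoDual y lam θ ≤ lassoDual y lam θh)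
    {w : ι → ℝ} (hw : ∀ v, lassoObjective b y lam w ≤ lassoObjective b y lam v)
    {i : ι} (hi : |⟪θh, b i⟫| < 1) : w i = 0 := by
  obtain ⟨θ, hθ, hθw⟩ := exists_lassoDual_eq_lassoObjective hlam hw
  have hgap : lassoDual y lam θh = lassoObjective b y lam w :=
    le_antisymm (lassoDual_le_lassoObjective hlam hθh w) (hθw.symm.trans_le (hθh_max θ hθ))
  exact eq_zero_of_lassoDual_eq_lassoObjective hlam hθh hgap hi

end Lasso

theorem stmt11 (d p : ℕ)
    (b : Fin p → EuclideanSpace ℝ (Fin d)) (y : EuclideanSpace ℝ (Fin d))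
    (lam : ℝ) (hlam : 0 < lam)
    (f : (Fin p → ℝ) → ℝ)
    (hf : ∀ w, f w = (1/2) * ‖y - ∑ i, w i • b i‖ ^ 2 + lam * ∑ i, |w i|)
    (g : EuclideanSpace ℝ (Fin d) → ℝ)
    (hg : ∀ θ, g θ = (1/2) * ‖y‖ ^ 2 - (lam ^ 2 / 2) * ‖θ - lam⁻¹ • y‖ ^ 2)
    (θh : EuclideanSpace ℝ (Fin d))
    (hθfeas : ∀ i, |(inner ℝ θh (b i) : ℝ)| ≤ 1)
    (hθopt : ∀ θ, (∀ i, |(inner ℝ θ (b i) : ℝ)| ≤ 1) → g θ ≤ g θh)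
    (S : Set (Fin p)) (hS : ∀ i, |(inner ℝ θh (b i) : ℝ)| = 1 → i ∈ S) :
    (∀ wh : Fin p → ℝ, (∀ w, f wh ≤ f w) →
      (∀ i ∉ S, wh i = 0) ∧ (∀ z : Fin p → ℝ, (∀ i ∉ S, z i = 0) → f wh ≤ f z)) ∧
    (∀ zs : Fin p → ℝ, (∀ i ∉ S, zs i = 0) →
      (∀ z : Fin p → ℝ, (∀ i ∉ S, z i = 0) → f zs ≤ f z) →
      ∀ w, f zs ≤ f w) := by
  obtain rfl : f = lassoObjective b y lam := funext hf
  obtain rfl : g = lassoDual y lam := funext hg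
  have hsupp : ∀ wh, (∀ w, lassoObjective b y lam wh ≤ lassoObjective b y lam w) →
      ∀ i ∉ S, wh i = 0 := fun wh hwh i hi =>
    lassoMinimizer_apply_eq_zero_of_abs_inner_lt_one hlam hθfeas hθopt hwh
      (lt_of_le_of_ne (hθfeas i) (mt (hS i) hi))
  refine ⟨fun wh hwh => ⟨hsupp wh hwh, fun z _ => hwh z⟩, fun zs _ hzs w => ?_⟩
  obtain ⟨w₀, hw₀⟩ := exists_forall_lassoObjective_le b y hlam
  exact (hzs w₀ (hsupp w₀ hw₀)).trans (hw₀ w)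
end

section
/- Consider the iterative refinement: given a ball S(q_k, r_k) containing a point θ* and a unit vector n_k with c_k such that n_k^T θ* ≤ c_k and ψ_k = (q_k^T n_k − c_k)/r_k ∈ (0, 1], define q_{k+1} = q_k − ψ_k r_k n_k and r_{k+1} = r_k √(1 − ψ_k²). Then θ* ∈ S(q_{k+1}, r_{k+1}) and r_{k+1} < r_k. -/
/-!
The ball `S(q, r)` cut by the half space `⟪n, θ⟫ ≤ c` is a dome whose base is a disc of radius
`√(r² - t²)` centred at `q - t n`, where `t = ⟪q, n⟫ - c ≥ 0`; the ball around that centre with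
that radius contains the whole dome. With `t = ψ r` its radius is `r √(1 - ψ²)`, and `ψ > 0`
makes it strictly smaller than `r`.
-/

open Metric RealInnerProductSpace

theorem closedBall_inter_halfSpace_subset {E : Type*} [NormedAddCommGroup E]
    [InnerProductSpace ℝ E] {q u : E} {r c : ℝ} (hu : ‖u‖ = 1) (hc : c ≤ ⟪q, u⟫) :
    closedBall q r ∩ {x | ⟪u, x⟫ ≤ c} ⊆
      closedBall (q - (⟪q, u⟫ - c) • u) √(r ^ 2 - (⟪q, u⟫ - c) ^ 2) := by
  rintro x ⟨hx, hhalf : ⟪u, x⟫ ≤ c⟩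
  set t := ⟪q, u⟫ - c with ht
  have hdist : ‖x - q‖ ≤ r := mem_closedBall_iff_norm.mp hx
  have hinner : ⟪x - q, u⟫ ≤ -t := by
    rw [inner_sub_left, real_inner_comm]
    linarith
  have hsq : ‖x - (q - t • u)‖ ^ 2 ≤ r ^ 2 - t ^ 2 := by
    calc ‖x - (q - t • u)‖ ^ 2 = ‖x - q‖ ^ 2 + 2 * t * ⟪x - q, u⟫ + t ^ 2 := by
          rw [sub_sub_eq_add_sub, add_sub_right_comm, norm_add_sq_real, inner_smul_right,
            norm_smul, Real.norm_eq_abs, abs_of_nonneg (sub_nonneg.mpr hc), hu]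
          ring
      _ ≤ r ^ 2 + 2 * t * (-t) + t ^ 2 := by gcongr
      _ = r ^ 2 - t ^ 2 := by ring
  rw [mem_closedBall_iff_norm]
  simpa using Real.abs_le_sqrt hsq

theorem stmt18_general (n : ℕ) (qk θs nk : EuclideanSpace ℝ (Fin n)) (rk ck : ℝ)
    (hrk : 0 < rk) (hnk : ‖nk‖ = 1)
    (hball : θs ∈ Metric.closedBall qk rk)
    (hhalf : (inner ℝ nk θs : ℝ) ≤ ck)
    (ψ : ℝ) (hψ : ψ = ((inner ℝ qk nk : ℝ) - ck) / rk) (hψ0 : 0 < ψ) :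
    θs ∈ Metric.closedBall (qk - (ψ * rk) • nk) (rk * Real.sqrt (1 - ψ ^ 2)) ∧
    rk * Real.sqrt (1 - ψ ^ 2) < rk := by
  have hψrk : ψ * rk = ⟪qk, nk⟫ - ck := by
    rw [hψ, div_mul_cancel₀ _ hrk.ne']
  have hradius : √(rk ^ 2 - (ψ * rk) ^ 2) = rk * √(1 - ψ ^ 2) := by
    rw [show rk ^ 2 - (ψ * rk) ^ 2 = rk ^ 2 * (1 - ψ ^ 2) by ring,
      Real.sqrt_mul (sq_nonneg rk), Real.sqrt_sq hrk.le]
  have hc : ck ≤ ⟪qk, nk⟫ := by linarith [mul_pos hψ0 hrk]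
  refine ⟨?_, ?_⟩
  · rw [← hradius, hψrk]
    exact closedBall_inter_halfSpace_subset hnk hc ⟨hball, hhalf⟩
  · have hsqrt : √(1 - ψ ^ 2) < 1 := (Real.sqrt_lt' one_pos).mpr (by nlinarith)
    simpa using mul_lt_mul_of_pos_left hsqrt hrk

theorem stmt18 (n : ℕ) (qk θs nk : EuclideanSpace ℝ (Fin n)) (rk ck : ℝ)
    (hrk : 0 < rk) (hnk : ‖nk‖ = 1)
    (hball : θs ∈ Metric.closedBall qk rk)
    (hhalf : (inner ℝ nk θs : ℝ) ≤ ck)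
    (ψ : ℝ) (hψ : ψ = ((inner ℝ qk nk : ℝ) - ck) / rk) (hψ0 : 0 < ψ) (hψ1 : ψ ≤ 1) :
    θs ∈ Metric.closedBall (qk - (ψ * rk) • nk) (rk * Real.sqrt (1 - ψ ^ 2)) ∧
    rk * Real.sqrt (1 - ψ ^ 2) < rk :=
  stmt18_general n qk θs nk rk ck hrk hnk hball hhalf ψ hψ hψ0
end
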